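/- arXiv:1809.05017 — 3 statements merged into one kernel-verified Lean document; each statement's English description precedes it below -/
import Mathlib

section
/- For every universal co-Büchi k_A-register automaton A over I ∪ O and every k_T ≥ 1, every Boolean path of the automaton AT_B@W has either exactly one or infinitely many corresponding data-paths in the product AT = A ⊗ T_all; in particular, it has at least one. -/
/-- A register word automaton over Boolean signals `P`, data-domain `D`, states `Q`,
and registers indexed by `R` (for a `k`-register automaton, `R = Fin k`).
The transition function reads a Boolean letter, an input-guard and an output-guard
(comparisons of the data-values of `i` resp. `o` with the registers) and yields
a set of (assignment, successor-state) pairs. -/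
structure RegAutomaton (P D Q R : Type) where
  d0 : D
  q0 : Q
  F : Set Q
  tr : Q → (P → Bool) → (R → Bool) → (R → Bool) → Set ((R → Bool) × Q)

/-- A data-path of a register automaton on the letter sequence `(l j, di j, dout j)`. -/
structure DataPath {P D Q R : Type} [DecidableEq D] (A : RegAutomaton P D Q R)
    (l : ℕ → P → Bool) (di dout : ℕ → D) where
  st : ℕ → Q
  regs : ℕ → R → D
  asgn : ℕ → R → Bool
  init_st : st 0 = A.q0
  init_regs : ∀ n, regs 0 n = A.d0
  step : ∀ j, (asgn j, st (j + 1)) ∈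
    A.tr (st j) (l j) (fun n => decide (di j = regs j n)) (fun n => decide (dout j = regs j n))
  update : ∀ j n, regs (j + 1) n = if asgn j n then di j else regs j n

/-- The register values of the automaton `T_all` along a word: registers start at `d0`
and the value of the data-input is stored into exactly the registers named by the
`Asgn^T` signals of the letter. -/
def tallRegs {D : Type} {kT : ℕ} (d0 : D) (asg : ℕ → Fin kT → Bool) (di : ℕ → D) :
    ℕ → Fin kT → D
  | 0 => fun _ => d0
  | j + 1 => fun n => if asg j n then di j else tallRegs d0 asg di j n

/-- The product `AT = A ⊗ T_all` of a universal co-Büchi `k_A`-register automaton `A`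
over `I ∪ O` with the deterministic automaton `T_all` (`k_T` fresh registers, fresh
signals `Asgn^T` modelled by `Fin kT`): states are `Q × Bool` (the Boolean component
records whether the `T_all`-component is still in `q0`, i.e. not yet in `⊥`); the
co-Büchi set is `F^A × {q0,⊥} ∪ Q^A × {⊥}`; the `A`-component follows `δ^A` on the
`R^A`-parts of the guards, and the `T_all`-component stays alive iff the output-guard
holds for at least one `R^T`-register, storing (while alive) the data-input into exactly
the registers named by the `Asgn^T` signals. -/
def prodTall {I O D Q : Type} {kA : ℕ} (A : RegAutomaton (I ⊕ O) D Q (Fin kA)) (kT : ℕ) :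
    RegAutomaton ((I ⊕ O) ⊕ Fin kT) D (Q × Bool) (Fin kA ⊕ Fin kT) where
  d0 := A.d0
  q0 := (A.q0, true)
  F := {s | s.1 ∈ A.F ∨ s.2 = false}
  tr := fun s l gi go =>
    {x | ((fun n => x.1 (Sum.inl n)), x.2.1) ∈
           A.tr s.1 (fun p => l (Sum.inl p)) (fun n => gi (Sum.inl n)) (fun n => go (Sum.inl n)) ∧
         x.2.2 = (s.2 && decide (∃ n : Fin kT, go (Sum.inr n) = true)) ∧
         ∀ n : Fin kT, x.1 (Sum.inr n) = (x.2.2 && l (Sum.inr n))}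

/-- The transition relation of the verifier: its states are partitions of the
register set (modelled as setoids); the guard letter must respect the current partition,
and the successor partition is determined by the assignment letter. -/
def VTrans {R : Type} (pa pa' : Setoid R) (gi go a : R → Bool) : Prop :=
  (∀ m n : R, pa.r m n → gi m = gi n ∧ go m = go n) ∧
  (∀ m n : R, ¬ pa.r m n → ¬(gi m = true ∧ gi n = true) ∧ ¬(go m = true ∧ go n = true)) ∧
  (∀ m n : R, pa'.r m n ↔
    ((a m = true ∧ a n = true) ∨ (a m = false ∧ a n = true ∧ gi m = true) ∨
     (a m = true ∧ a n = false ∧ gi n = true) ∨ (a m = false ∧ a n = false ∧ pa.r m n)))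

/-- A Boolean path of the automaton `AT_B @ W`, over the signals
`I ∪ O ∪ Asgn^T ∪ G_i^A ∪ G_i^T ∪ O_{k_T} ∪ Asgn^A ∪ Asgn^T`:
`lIO` is the `2^(I∪O)` part, `asgnTP` the raw `Asgn^T` signals of `AT`'s letter,
`gi` the input-guard letter over `R^A ∪ R^T`, `ok : Fin kT` the `O_{k_T}`-encoded
register index replacing the output-guard, and `asgn` the assignment letter over
`R^A ∪ R^T`.  A step requires some output-guard `g_o` whose `R^T`-part contains the
chosen register `ok j`, a joint transition of the Boolean associate of `AT = A ⊗ T_all`,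
and a verifier transition on the partitions of `R^A ∪ R^T` (starting from the one-block
partition `⊤`). -/
structure WPath {I O D Q : Type} {kA : ℕ} (A : RegAutomaton (I ⊕ O) D Q (Fin kA))
    (kT : ℕ) where
  st : ℕ → Q × Bool
  part : ℕ → Setoid (Fin kA ⊕ Fin kT)
  lIO : ℕ → (I ⊕ O) → Bool
  asgnTP : ℕ → Fin kT → Bool
  gi : ℕ → (Fin kA ⊕ Fin kT) → Bool
  ok : ℕ → Fin kT
  asgn : ℕ → (Fin kA ⊕ Fin kT) → Bool
  init_st : st 0 = (A.q0, true)
  init_part : part 0 = ⊤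
  step : ∀ j, ∃ go : (Fin kA ⊕ Fin kT) → Bool,
    go (Sum.inr (ok j)) = true ∧
    (asgn j, st (j + 1)) ∈
      (prodTall A kT).tr (st j) (Sum.elim (lIO j) (asgnTP j)) (gi j) go ∧
    VTrans (part j) (part (j + 1)) (gi j) go (asgn j)

/-- A data-path of `AT = A ⊗ T_all` corresponds to a Boolean path of `AT_B @ W` iff they
visit the same states, carry the same `2^(I ∪ O ∪ Asgn^T)`-letters, the input-guard and
assignment signals encode the comparisons and assignments of the data-path at every step,
and the `O_{k_T}`-letter at each step encodes some register `r^T_j` whose current value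
equals the data-path's value of the data-output at that step. -/
def CorrW {I O D Q : Type} [DecidableEq D] {kA kT : ℕ}
    {A : RegAutomaton (I ⊕ O) D Q (Fin kA)}
    {l : ℕ → ((I ⊕ O) ⊕ Fin kT) → Bool} {di dout : ℕ → D}
    (dp : DataPath (prodTall A kT) l di dout) (wp : WPath A kT) : Prop :=
  (∀ j, wp.st j = dp.st j) ∧
  (∀ j p, wp.lIO j p = l j (Sum.inl p)) ∧
  (∀ j n, wp.asgnTP j n = l j (Sum.inr n)) ∧
  (∀ j r, wp.gi j r = decide (di j = dp.regs j r)) ∧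
  (∀ j, wp.asgn j = dp.asgn j) ∧
  (∀ j, dout j = dp.regs j (Sum.inr (wp.ok j)))

/-- The set of data-paths of `AT = A ⊗ T_all` (together with their data components; the
Boolean letter sequence is forced by the correspondence) corresponding to a given Boolean
path of `AT_B @ W`. -/
def WCorrSet {I O D Q : Type} [DecidableEq D] {kA kT : ℕ}
    {A : RegAutomaton (I ⊕ O) D Q (Fin kA)} (wp : WPath A kT) :
    Set (Σ' (di : ℕ → D) (dout : ℕ → D),
      DataPath (prodTall A kT) (fun j => Sum.elim (wp.lIO j) (wp.asgnTP j)) di dout) :=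
  {x | CorrW x.2.2 wp}

section Aux

variable {I O D Q : Type} [Infinite D] [DecidableEq D] {kA kT : ℕ}
  {A : RegAutomaton (I ⊕ O) D Q (Fin kA)}

/-- A data value outside the range of `f`. -/
noncomputable def freshD (f : (Fin kA ⊕ Fin kT) → D) : D :=
  ((Set.finite_range f).infinite_compl).nonempty.choose

lemma freshD_spec (f : (Fin kA ⊕ Fin kT) → D) (r : Fin kA ⊕ Fin kT) : freshD f ≠ f r := by
  have h := ((Set.finite_range f).infinite_compl).nonempty.choose_spec
  exact fun hr => h ⟨r, hr.symm⟩

/-- The data-input value determined by the input-guard letter at step `j`, given current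
register values `f` (using the chooser `c` for a fresh value when the guard is all-false). -/
noncomputable def mkDiOf (wp : WPath A kT) (c : ((Fin kA ⊕ Fin kT) → D) → ℕ → D)
    (j : ℕ) (f : (Fin kA ⊕ Fin kT) → D) : D :=
  if h : ∃ r, wp.gi j r = true then f h.choose else c f j

/-- Register values along the constructed data-path. -/
noncomputable def mkRegs (wp : WPath A kT) (c : ((Fin kA ⊕ Fin kT) → D) → ℕ → D) :
    ℕ → (Fin kA ⊕ Fin kT) → D
  | 0 => fun _ => A.d0
  | j + 1 => fun n =>
      if wp.asgn j n then mkDiOf wp c j (mkRegs wp c j) else mkRegs wp c j n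

/-- The data-input sequence of the constructed data-path. -/
noncomputable def mkDi (wp : WPath A kT) (c : ((Fin kA ⊕ Fin kT) → D) → ℕ → D) (j : ℕ) : D :=
  mkDiOf wp c j (mkRegs wp c j)

/-- The data-output sequence of the constructed data-path. -/
noncomputable def mkDout (wp : WPath A kT) (c : ((Fin kA ⊕ Fin kT) → D) → ℕ → D) (j : ℕ) : D :=
  mkRegs wp c j (Sum.inr (wp.ok j))

lemma mkRegs_succ (wp : WPath A kT) (c : ((Fin kA ⊕ Fin kT) → D) → ℕ → D) (j : ℕ)
    (n : Fin kA ⊕ Fin kT) :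
    mkRegs wp c (j + 1) n = if wp.asgn j n then mkDi wp c j else mkRegs wp c j n := rfl

/-- The output-guard letter chosen at step `j` of the Boolean path. -/
noncomputable def wGo (wp : WPath A kT) (j : ℕ) : (Fin kA ⊕ Fin kT) → Bool :=
  (wp.step j).choose

lemma wGo_spec (wp : WPath A kT) (j : ℕ) :
    wGo wp j (Sum.inr (wp.ok j)) = true ∧
    (wp.asgn j, wp.st (j + 1)) ∈
      (prodTall A kT).tr (wp.st j) (Sum.elim (wp.lIO j) (wp.asgnTP j)) (wp.gi j) (wGo wp j) ∧
    VTrans (wp.part j) (wp.part (j + 1)) (wp.gi j) (wGo wp j) (wp.asgn j) :=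
  (wp.step j).choose_spec

/-- The input guard letter encodes the comparisons of the constructed data-input with the
constructed register values, given the partition invariant at step `j`. -/
lemma guardEq (wp : WPath A kT) (c : ((Fin kA ⊕ Fin kT) → D) → ℕ → D)
    (hc : ∀ f j r, c f j ≠ f r) (j : ℕ)
    (hj : ∀ m n, mkRegs wp c j m = mkRegs wp c j n ↔ (wp.part j).r m n)
    (n : Fin kA ⊕ Fin kT) :
    wp.gi j n = decide (mkDi wp c j = mkRegs wp c j n) := by
  obtain ⟨-, -, V1, V2, -⟩ := wGo_spec wp j
  unfold mkDi mkDiOf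
  split_ifs with h
  · have hr : wp.gi j h.choose = true := h.choose_spec
    by_cases hp : (wp.part j).r h.choose n
    · rw [← (V1 _ n hp).1, hr]
      exact (decide_eq_true ((hj _ n).2 hp)).symm
    · have hne : mkRegs wp c j h.choose ≠ mkRegs wp c j n := fun he => hp ((hj _ n).1 he)
      have hgn : wp.gi j n = false :=
        Bool.eq_false_iff.2 fun hn => (V2 _ n hp).1 ⟨hr, hn⟩
      rw [hgn, (decide_eq_false hne)]
  · push_neg at h
    rw [Bool.eq_false_iff.2 (h n), decide_eq_false (hc (mkRegs wp c j) j n)]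

/-- The chosen output guard encodes the comparisons of the constructed data-output with
the constructed register values. -/
lemma goEq (wp : WPath A kT) (c : ((Fin kA ⊕ Fin kT) → D) → ℕ → D) (j : ℕ)
    (hj : ∀ m n, mkRegs wp c j m = mkRegs wp c j n ↔ (wp.part j).r m n)
    (n : Fin kA ⊕ Fin kT) :
    wGo wp j n = decide (mkDout wp c j = mkRegs wp c j n) := by
  obtain ⟨hok, -, V1, V2, -⟩ := wGo_spec wp j
  unfold mkDout
  by_cases hp : (wp.part j).r (Sum.inr (wp.ok j)) n
  · rw [← (V1 _ n hp).2, hok]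
    exact (decide_eq_true ((hj _ n).2 hp)).symm
  · have hne : mkRegs wp c j (Sum.inr (wp.ok j)) ≠ mkRegs wp c j n :=
      fun he => hp ((hj _ n).1 he)
    have hgn : wGo wp j n = false :=
      Bool.eq_false_iff.2 fun hn => (V2 _ n hp).2 ⟨hok, hn⟩
    rw [hgn, decide_eq_false hne]

/-- The partition invariant: two registers hold the same constructed value iff they are
in the same block of the verifier's partition. -/
lemma mkInv (wp : WPath A kT) (c : ((Fin kA ⊕ Fin kT) → D) → ℕ → D)
    (hc : ∀ f j r, c f j ≠ f r) :
    ∀ j m n, mkRegs wp c j m = mkRegs wp c j n ↔ (wp.part j).r m n := by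
  intro j
  induction j with
  | zero =>
    intro m n
    rw [wp.init_part]
    simp [mkRegs]
  | succ j ih =>
    intro m n
    obtain ⟨-, -, -, -, V3⟩ := wGo_spec wp j
    have hg : ∀ n, (mkDi wp c j = mkRegs wp c j n) ↔ wp.gi j n = true := by
      intro n
      rw [guardEq wp c hc j ih n, decide_eq_true_eq]
    rw [V3, mkRegs_succ, mkRegs_succ]
    cases ha : wp.asgn j m <;> cases hb : wp.asgn j n <;> simp [ha, hb]
    · exact ih m n
    · rw [eq_comm]; exact hg m
    · exact hg n

/-- The constructed data-path of `AT = A ⊗ T_all`. -/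
noncomputable def mkDP (wp : WPath A kT) (c : ((Fin kA ⊕ Fin kT) → D) → ℕ → D)
    (hc : ∀ f j r, c f j ≠ f r) :
    DataPath (prodTall A kT) (fun j => Sum.elim (wp.lIO j) (wp.asgnTP j))
      (mkDi wp c) (mkDout wp c) where
  st := wp.st
  regs := mkRegs wp c
  asgn := wp.asgn
  init_st := wp.init_st
  init_regs := fun _ => rfl
  step := fun j => by
    obtain ⟨-, hmem, -⟩ := wGo_spec wp j
    have h1 : (fun n => decide (mkDi wp c j = mkRegs wp c j n)) = wp.gi j :=
      funext fun n => (guardEq wp c hc j (mkInv wp c hc j) n).symm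
    have h2 : (fun n => decide (mkDout wp c j = mkRegs wp c j n)) = wGo wp j :=
      funext fun n => (goEq wp c j (mkInv wp c hc j) n).symm
    rw [h1, h2]
    exact hmem
  update := fun _ _ => rfl

lemma mkDP_mem (wp : WPath A kT) (c : ((Fin kA ⊕ Fin kT) → D) → ℕ → D)
    (hc : ∀ f j r, c f j ≠ f r) :
    (⟨mkDi wp c, mkDout wp c, mkDP wp c hc⟩ :
      Σ' (di : ℕ → D) (dout : ℕ → D),
        DataPath (prodTall A kT) (fun j => Sum.elim (wp.lIO j) (wp.asgnTP j)) di dout) ∈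
      WCorrSet wp :=
  ⟨fun _ => rfl, fun _ _ => rfl, fun _ _ => rfl,
    fun j r => guardEq wp c hc j (mkInv wp c hc j) r, fun _ => rfl, fun _ => rfl⟩

/-- If every input-guard letter compares positively with some register, the corresponding
data-path is unique. -/
lemma uniqW (wp : WPath A kT) (h : ∀ j, ∃ r, wp.gi j r = true)
    {x y : Σ' (di : ℕ → D) (dout : ℕ → D),
      DataPath (prodTall A kT) (fun j => Sum.elim (wp.lIO j) (wp.asgnTP j)) di dout}
    (hx : x ∈ WCorrSet wp) (hy : y ∈ WCorrSet wp) : x = y := by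
  obtain ⟨di₁, dout₁, dp₁⟩ := x
  obtain ⟨di₂, dout₂, dp₂⟩ := y
  obtain ⟨hst₁, -, -, hgi₁, hasgn₁, hdout₁⟩ := hx
  obtain ⟨hst₂, -, -, hgi₂, hasgn₂, hdout₂⟩ := hy
  dsimp only at hst₁ hgi₁ hasgn₁ hdout₁ hst₂ hgi₂ hasgn₂ hdout₂
  have key : ∀ j, (∀ r, dp₁.regs j r = dp₂.regs j r) ∧ di₁ j = di₂ j := by
    intro j
    induction j with
    | zero =>
      have hr : ∀ r, dp₁.regs 0 r = dp₂.regs 0 r := fun r => by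
        rw [dp₁.init_regs, dp₂.init_regs]
      refine ⟨hr, ?_⟩
      obtain ⟨r, hrr⟩ := h 0
      have h1 : di₁ 0 = dp₁.regs 0 r := by
        have := (hgi₁ 0 r).symm.trans hrr
        exact of_decide_eq_true this
      have h2 : di₂ 0 = dp₂.regs 0 r := by
        have := (hgi₂ 0 r).symm.trans hrr
        exact of_decide_eq_true this
      rw [h1, h2, hr r]
    | succ j ih =>
      have hr : ∀ r, dp₁.regs (j + 1) r = dp₂.regs (j + 1) r := fun r => by
        rw [dp₁.update, dp₂.update, ← hasgn₁ j, ← hasgn₂ j, ih.2, ih.1 r]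
      refine ⟨hr, ?_⟩
      obtain ⟨r, hrr⟩ := h (j + 1)
      have h1 : di₁ (j + 1) = dp₁.regs (j + 1) r := by
        have := (hgi₁ (j + 1) r).symm.trans hrr
        exact of_decide_eq_true this
      have h2 : di₂ (j + 1) = dp₂.regs (j + 1) r := by
        have := (hgi₂ (j + 1) r).symm.trans hrr
        exact of_decide_eq_true this
      rw [h1, h2, hr r]
  have hdi : di₁ = di₂ := funext fun j => (key j).2
  subst hdi
  have hdo : dout₁ = dout₂ := funext fun j => by
    rw [hdout₁ j, hdout₂ j, (key j).1]
  subst hdo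
  suffices hdp : dp₁ = dp₂ by rw [hdp]
  have h1 : dp₁.st = dp₂.st := funext fun j => (hst₁ j).symm.trans (hst₂ j)
  have h2 : dp₁.regs = dp₂.regs := funext fun j => funext fun r => (key j).1 r
  have h3 : dp₁.asgn = dp₂.asgn := funext fun j => (hasgn₁ j).symm.trans (hasgn₂ j)
  obtain ⟨st₁, regs₁, asgn₁, _, _, _, _⟩ := dp₁
  obtain ⟨st₂, regs₂, asgn₂, _, _, _, _⟩ := dp₂
  simp only at h1 h2 h3
  subst h1; subst h2; subst h3
  rfl

end Aux

/-- for every universal co-Büchi `k_A`-register automaton `A` over `I ∪ O`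
and every `k_T ≥ 1`, every Boolean path of `AT_B @ W` has either exactly one or
infinitely many corresponding data-paths in `AT = A ⊗ T_all`; in particular at least
one. -/
theorem stmt9 (D I O Q : Type) [Infinite D] [DecidableEq D] [Finite I] [Finite O] [Finite Q]
    (kA kT : ℕ) (hkT : 1 ≤ kT) (A : RegAutomaton (I ⊕ O) D Q (Fin kA))
    (wp : WPath A kT) :
    (WCorrSet wp).Nonempty ∧
      ((∃! x, x ∈ WCorrSet wp) ∨ (WCorrSet wp).Infinite) := by
  classical
  have hc0' : ∀ (f : (Fin kA ⊕ Fin kT) → D) (j : ℕ) r,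
      (fun f (_ : ℕ) => freshD f) f j ≠ f r := fun f _ r => freshD_spec f r
  set c0 : ((Fin kA ⊕ Fin kT) → D) → ℕ → D := fun f _ => freshD f with hc0def
  refine ⟨⟨_, mkDP_mem wp c0 hc0'⟩, ?_⟩
  by_cases hall : ∀ j, ∃ r, wp.gi j r = true
  · exact Or.inl ⟨_, mkDP_mem wp c0 hc0',
      fun y hy => uniqW wp hall hy (mkDP_mem wp c0 hc0')⟩
  · right
    push_neg at hall
    obtain ⟨j0, hj0⟩ := hall
    set base : (Fin kA ⊕ Fin kT) → D := mkRegs wp c0 j0 with hbasedef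
    have hSinf : ((Set.range base)ᶜ).Infinite := (Set.finite_range base).infinite_compl
    haveI := hSinf.to_subtype
    set cd : D → ((Fin kA ⊕ Fin kT) → D) → ℕ → D :=
      fun d f j => if j = j0 ∧ ∀ r, d ≠ f r then d else freshD f with hcddef
    have hcd : ∀ d (f : (Fin kA ⊕ Fin kT) → D) (j : ℕ) r, cd d f j ≠ f r := by
      intro d f j r
      dsimp only [cd]
      split_ifs with h
      · exact h.2 r
      · exact freshD_spec f r
    have hpre : ∀ (d : D), ∀ j ≤ j0, mkRegs wp (cd d) j = mkRegs wp c0 j := by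
      intro d j
      induction j with
      | zero => intro _; rfl
      | succ j ih =>
        intro hle
        have hjlt : j < j0 := Nat.lt_of_succ_le hle
        have heq := ih hjlt.le
        funext n
        rw [mkRegs_succ, mkRegs_succ, heq]
        congr 1
        unfold mkDi mkDiOf
        rw [heq]
        split
        · rfl
        · dsimp only [cd, c0]
          rw [if_neg fun hcond => absurd hcond.1 hjlt.ne]
    have hdij0 : ∀ d : ((Set.range base)ᶜ : Set D), mkDi wp (cd d) j0 = (d : D) := by
      rintro ⟨d, hd⟩
      have hd' : ∀ r, d ≠ base r := fun r he => hd ⟨r, he.symm⟩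
      show mkDi wp (cd d) j0 = d
      unfold mkDi mkDiOf
      rw [hpre d j0 le_rfl, dif_neg (fun h : ∃ r, wp.gi j0 r = true => hj0 h.choose h.choose_spec)]
      dsimp only [cd]
      rw [if_pos ⟨rfl, hd'⟩]
    refine Set.infinite_of_injective_forall_mem
      (f := fun d : ((Set.range base)ᶜ : Set D) =>
        (⟨mkDi wp (cd d), mkDout wp (cd d), mkDP wp (cd d) (hcd d)⟩ :
          Σ' (di : ℕ → D) (dout : ℕ → D),
            DataPath (prodTall A kT) (fun j => Sum.elim (wp.lIO j) (wp.asgnTP j)) di dout))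
      ?_ (fun d => mkDP_mem wp (cd d) (hcd d))
    intro d₁ d₂ hEq
    have h1 : mkDi wp (cd d₁) j0 = mkDi wp (cd d₂) j0 := by
      have := congrArg (fun x : (Σ' (di : ℕ → D) (dout : ℕ → D),
        DataPath (prodTall A kT) (fun j => Sum.elim (wp.lIO j) (wp.asgnTP j)) di dout) =>
        x.1 j0) hEq
      exact this
    rw [hdij0 d₁, hdij0 d₂] at h1
    exact Subtype.ext h1
end

section
/- For every universal co-Büchi k_A-register automaton A over Boolean inputs I and outputs O with initial register value d0 and every k_T ≥ 1: there exists a k_T-register transducer T over I and O (with initial register value d0) such that T ⊨ A if and only if there exists a register-less deterministic (Mealy) transducer with Boolean inputs I ∪ G_i^T and Boolean outputs O ∪ Asgn^T ∪ O_{k_T} all of whose words are accepted by hide_A(AT_B@W). -/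
/-- A path of the automaton `hide_A(AT_B @ W)`, over the visible signals
`I ∪ O ∪ Asgn^T ∪ G_i^T ∪ O_{k_T} ∪ Asgn^T`: same states as `AT_B @ W`; a step on a
letter exists iff `AT_B @ W` has a transition on some letter agreeing with it on the
visible signals (the hidden signals `G_i^A` and `Asgn^A` are existentially chosen). -/
structure HPath {I O D Q : Type} {kA : ℕ} (A : RegAutomaton (I ⊕ O) D Q (Fin kA))
    (kT : ℕ) where
  st : ℕ → Q × Bool
  part : ℕ → Setoid (Fin kA ⊕ Fin kT)
  lIO : ℕ → (I ⊕ O) → Bool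
  asgnTP : ℕ → Fin kT → Bool
  giT : ℕ → Fin kT → Bool
  ok : ℕ → Fin kT
  asgnT : ℕ → Fin kT → Bool
  init_st : st 0 = (A.q0, true)
  init_part : part 0 = ⊤
  step : ∀ j, ∃ (giA : Fin kA → Bool) (asgnA : Fin kA → Bool)
      (go : (Fin kA ⊕ Fin kT) → Bool),
    go (Sum.inr (ok j)) = true ∧
    (Sum.elim asgnA (asgnT j), st (j + 1)) ∈
      (prodTall A kT).tr (st j) (Sum.elim (lIO j) (asgnTP j)) (Sum.elim giA (giT j)) go ∧
    VTrans (part j) (part (j + 1)) (Sum.elim giA (giT j)) go (Sum.elim asgnA (asgnT j))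

/-- A path of `AT_B @ W` corresponds to a path of `hide_A(AT_B @ W)` iff they visit the
same states and their letters agree on the visible signals
`I ∪ O ∪ Asgn^T ∪ G_i^T ∪ O_{k_T} ∪ Asgn^T`. -/
def CorrWH {I O D Q : Type} {kA kT : ℕ} {A : RegAutomaton (I ⊕ O) D Q (Fin kA)}
    (wp : WPath A kT) (hp : HPath A kT) : Prop :=
  (∀ j, hp.st j = wp.st j) ∧ (∀ j, hp.part j = wp.part j) ∧
  (∀ j, hp.lIO j = wp.lIO j) ∧ (∀ j, hp.asgnTP j = wp.asgnTP j) ∧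
  (∀ j n, hp.giT j n = wp.gi j (Sum.inr n)) ∧
  (∀ j, hp.ok j = wp.ok j) ∧
  (∀ j n, hp.asgnT j n = wp.asgn j (Sum.inr n))

/-- A `k`-register transducer with Boolean inputs `I`, Boolean outputs `O`,
data-domain `D` and (possibly infinite) state set `S`. -/
structure RegTransducer (I O D S : Type) (k : ℕ) where
  s0 : S
  d0 : D
  tr : S → (I → Bool) → (Fin k → Bool) → (O → Bool) × Fin k × (Fin k → Bool) × S

/-- `(lio, di, dout)` is a word of the register transducer `T`
(an element of `L(T) ⊆ (2^(I∪O) × D × D)^ω`). -/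
def IsWordOf {I O D S : Type} [DecidableEq D] {kT : ℕ} (T : RegTransducer I O D S kT)
    (lio : ℕ → (I ⊕ O) → Bool) (di dout : ℕ → D) : Prop :=
  ∃ (st : ℕ → S) (regs : ℕ → Fin kT → D),
    st 0 = T.s0 ∧ (∀ n, regs 0 n = T.d0) ∧
    ∀ j,
      let r := T.tr (st j) (fun a => lio j (Sum.inl a)) (fun n => decide (di j = regs j n))
      st (j + 1) = r.2.2.2 ∧ (∀ b, lio j (Sum.inr b) = r.1 b) ∧
      dout j = regs j r.2.1 ∧
      (∀ n, regs (j + 1) n = if r.2.2.1 n then di j else regs j n)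

/-- `(inp, giT, outp, asgnT, ok)` is a word of the Boolean associate `T_B` of `T`:
a register-less deterministic transducer with Boolean inputs `I ∪ G_i^T` and Boolean
outputs `O ∪ Asgn^T ∪ O_{k_T}`. -/
def IsBoolWordOf {I O D S : Type} {kT : ℕ} (T : RegTransducer I O D S kT)
    (inp : ℕ → I → Bool) (giT : ℕ → Fin kT → Bool)
    (outp : ℕ → O → Bool) (asgnT : ℕ → Fin kT → Bool) (ok : ℕ → Fin kT) : Prop :=
  ∃ st : ℕ → S, st 0 = T.s0 ∧
    ∀ j,
      let r := T.tr (st j) (inp j) (giT j)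
      st (j + 1) = r.2.2.2 ∧ outp j = r.1 ∧ ok j = r.2.1 ∧ asgnT j = r.2.2.1

/-- A register-less deterministic (Mealy) transducer with input letters `Inp`,
output letters `Out` and (finite or infinite) state set `S`. -/
structure Mealy (Inp Out S : Type) where
  s0 : S
  tr : S → Inp → Out × S

/-! Along a path of `hide_A(AT_B @ W)` the partitions of `R^A ∪ R^T` evolve by verifier
transitions, and any such sequence is realised by register contents whose kernels are the
partitions: at each step the input guard is constant on blocks and flags at most one block, so
the data-input can be taken equal to that block's value or, `D` being infinite, fresh.
Conversely, the kernels of the register contents along a data-path of `A ⊗ T_all` always form a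
verifier path. Because the `O_{k_T}`-signal names a register holding the data-output, the
`T_all` component never reaches `⊥`; and a register transducer corresponds word by word to its
Boolean associate, which reads the input guard and emits the assignment and output register. -/

section Verifier

variable {R D : Type}

def assignRegs (a : R → Bool) (d : D) (f : R → D) : R → D :=
  fun r => if a r then d else f r

variable [DecidableEq D]

theorem vTrans_ker_assignRegs (f : R → D) (d e : D) (a : R → Bool) :
    VTrans (Setoid.ker f) (Setoid.ker (assignRegs a d f))
      (fun r => decide (d = f r)) (fun r => decide (e = f r)) a := by
  refine ⟨fun m n (h : f m = f n) => by simp [h], fun m n (h : f m ≠ f n) => ?_, fun m n => ?_⟩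
  · constructor <;> rintro ⟨hm, hn⟩ <;> simp only [decide_eq_true_eq] at hm hn <;>
      exact h (hm.symm.trans hn)
  · change assignRegs a d f m = assignRegs a d f n ↔ _
    unfold assignRegs
    cases a m <;> cases a n <;> simp [eq_comm]

theorem guard_eq_decide_of_respects {f : R → D} {g : R → Bool} {r₀ : R}
    (hblock : ∀ m n, f m = f n → g m = g n)
    (hsep : ∀ m n, g m = true → g n = true → f m = f n) (hr₀ : g r₀ = true) (r : R) :
    g r = decide (f r₀ = f r) := by
  by_cases h : f r₀ = f r
  · simp [h, ← hblock _ _ h, hr₀]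
  · simpa [h] using mt (hsep r₀ r hr₀) h

namespace VTrans

variable {f : R → D} {pa' : Setoid R} {gi go a : R → Bool}

theorem exists_inputGuard_eq_decide [Finite R] [Infinite D]
    (h : VTrans (Setoid.ker f) pa' gi go a) : ∃ d, ∀ r, gi r = decide (d = f r) := by
  have hblock m n (hmn : f m = f n) : gi m = gi n := (h.1 m n hmn).1
  have hsep m n (hm : gi m = true) (hn : gi n = true) : f m = f n :=
    by_contra fun hne => (h.2.1 m n hne).1 ⟨hm, hn⟩
  by_cases hflag : ∃ r₀, gi r₀ = true
  · obtain ⟨r₀, hr₀⟩ := hflag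
    exact ⟨f r₀, guard_eq_decide_of_respects hblock hsep hr₀⟩
  · obtain ⟨d, hd⟩ := (Set.finite_range f).infinite_compl.nonempty
    simp only [not_exists, Bool.not_eq_true] at hflag
    refine ⟨d, fun r => ?_⟩
    rw [hflag r, eq_comm, decide_eq_false]
    exact fun hdr => hd ⟨r, hdr.symm⟩

theorem outputGuard_eq_decide (h : VTrans (Setoid.ker f) pa' gi go a) {r₀ : R}
    (hr₀ : go r₀ = true) (r : R) : go r = decide (f r₀ = f r) :=
  guard_eq_decide_of_respects (fun m n hmn => (h.1 m n hmn).2)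
    (fun m n hm hn => by_contra fun hne => (h.2.1 m n hne).2 ⟨hm, hn⟩) hr₀ r

theorem eq_ker_assignRegs (h : VTrans (Setoid.ker f) pa' gi go a) {d : D}
    (hgi : ∀ r, gi r = decide (d = f r)) : pa' = Setoid.ker (assignRegs a d f) := by
  obtain rfl : gi = fun r => decide (d = f r) := funext hgi
  exact Setoid.ext fun m n =>
    (h.2.2 m n).trans ((vTrans_ker_assignRegs f d d a).2.2 m n).symm

end VTrans

theorem exists_regs_of_vTrans [Finite R] [Infinite D] (d₀ : D) {part : ℕ → Setoid R}
    {gi go a : ℕ → R → Bool} {out : ℕ → R} (h₀ : part 0 = ⊤)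
    (hV : ∀ j, VTrans (part j) (part (j + 1)) (gi j) (go j) (a j))
    (hout : ∀ j, go j (out j) = true) :
    ∃ (regs : ℕ → R → D) (di : ℕ → D), (∀ r, regs 0 r = d₀) ∧
      (∀ j, regs (j + 1) = assignRegs (a j) (di j) (regs j)) ∧
      (∀ j r, gi j r = decide (di j = regs j r)) ∧
      (∀ j r, go j r = decide (regs j (out j) = regs j r)) := by
  -- the hypothesis sits inside the existential so that `choose` gives a total choice function
  have hpick : ∀ j (f : R → D), ∃ d, part j = Setoid.ker f → ∀ r, gi j r = decide (d = f r) :=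
    fun j f => by
      by_cases hf : part j = Setoid.ker f
      · obtain ⟨d, hd⟩ := (hf ▸ hV j).exists_inputGuard_eq_decide
        exact ⟨d, fun _ => hd⟩
      · exact ⟨d₀, fun h => absurd h hf⟩
  choose pick hpick using hpick
  let regs : ℕ → R → D := fun j =>
    Nat.rec (fun _ => d₀) (fun j f => assignRegs (a j) (pick j f) f) j
  have hker : ∀ j, part j = Setoid.ker (regs j) := by
    intro j
    induction j with
    | zero => exact h₀.trans (Setoid.eq_top_iff.2 fun _ _ => rfl).symm
    | succ j ih =>
      exact (ih ▸ hV j).eq_ker_assignRegs (hpick j (regs j) ih)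
  refine ⟨regs, fun j => pick j (regs j), fun _ => rfl, fun _ => rfl,
    fun j => hpick j (regs j) (hker j), fun j => ?_⟩
  exact ((hker j) ▸ hV j).outputGuard_eq_decide (hout j)

end Verifier

section Paths

variable {I O D Q : Type} {kA kT : ℕ} {A : RegAutomaton (I ⊕ O) D Q (Fin kA)}

theorem HPath.st_snd_eq_true (hp : HPath A kT) (j : ℕ) : (hp.st j).2 = true := by
  induction j with
  | zero => rw [hp.init_st]
  | succ j ih =>
    obtain ⟨_, _, go, hgo, hmem, -⟩ := hp.step j
    rw [hmem.2.1, ih, Bool.true_and, decide_eq_true_iff]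
    exact ⟨_, hgo⟩

variable [DecidableEq D]

theorem HPath.exists_dataPath [Infinite D] (hp : HPath A kT) :
    ∃ (di dout : ℕ → D) (dp : DataPath A hp.lIO di dout) (tregs : ℕ → Fin kT → D),
      (∀ j, dp.st j = (hp.st j).1) ∧ (∀ n, tregs 0 n = A.d0) ∧
      (∀ j n, tregs (j + 1) n = if hp.asgnT j n then di j else tregs j n) ∧
      (∀ j n, hp.giT j n = decide (di j = tregs j n)) ∧
      (∀ j, dout j = tregs j (hp.ok j)) := by
  choose giA asgnA go hgo hmem hV using hp.step
  obtain ⟨regs, di, h₀, hsucc, hgi, hgo'⟩ :=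
    exists_regs_of_vTrans A.d0 hp.init_part hV hgo
  refine ⟨di, fun j => regs j (.inr (hp.ok j)),
    ⟨fun j => (hp.st j).1, fun j n => regs j (.inl n), asgnA, by rw [hp.init_st],
      fun n => h₀ _, fun j => ?_, fun j n => congrFun (hsucc j) _⟩,
    fun j n => regs j (.inr n), fun _ => rfl, fun n => h₀ _,
    fun j n => congrFun (hsucc j) _, fun j n => hgi j (.inr n), fun _ => rfl⟩
  simpa only [hgi, hgo', Sum.elim_inl] using (hmem j).1

theorem DataPath.exists_hPath {lio : ℕ → (I ⊕ O) → Bool} {di dout : ℕ → D}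
    (dp : DataPath A lio di dout) (tregs : ℕ → Fin kT → D) (asgnT : ℕ → Fin kT → Bool)
    (ok : ℕ → Fin kT) (h₀ : ∀ n, tregs 0 n = A.d0)
    (hsucc : ∀ j n, tregs (j + 1) n = if asgnT j n then di j else tregs j n)
    (hout : ∀ j, dout j = tregs j (ok j)) :
    ∃ hp : HPath A kT, (∀ j, hp.st j = (dp.st j, true)) ∧ hp.lIO = lio ∧
      hp.asgnTP = asgnT ∧ (∀ j n, hp.giT j n = decide (di j = tregs j n)) ∧
      hp.ok = ok ∧ hp.asgnT = asgnT := by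
  let regs j : Fin kA ⊕ Fin kT → D := Sum.elim (dp.regs j) (tregs j)
  have hregs j :
      regs (j + 1) = assignRegs (Sum.elim (dp.asgn j) (asgnT j)) (di j) (regs j) := by
    funext r
    cases r with
    | inl n => exact dp.update j n
    | inr n => exact hsucc j n
  have hgi j : Sum.elim (fun n => decide (di j = dp.regs j n))
      (fun n => decide (di j = tregs j n)) = fun r => decide (di j = regs j r) := by
    funext r; cases r <;> rfl
  refine ⟨⟨fun j => (dp.st j, true), fun j => Setoid.ker (regs j), lio, asgnT,
    fun j n => decide (di j = tregs j n), ok, asgnT, by rw [dp.init_st], ?_, fun j => ?_⟩,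
    fun _ => rfl, rfl, rfl, fun _ _ => rfl, rfl, rfl⟩
  · refine Setoid.eq_top_iff.2 fun r r' => ?_
    change regs 0 r = regs 0 r'
    cases r <;> cases r' <;> simp [regs, dp.init_regs, h₀]
  · refine ⟨fun n => decide (di j = dp.regs j n), dp.asgn j,
      fun r => decide (dout j = regs j r), by simp [regs, hout], ⟨dp.step j, ?_, fun _ => rfl⟩, ?_⟩
    · simp [regs, hout]
    · rw [hgi, hregs]
      exact vTrans_ker_assignRegs _ _ _ _

end Paths

section BoolAssociate

variable {I O D S : Type} {k : ℕ}

def RegTransducer.boolAssociate (T : RegTransducer I O D S k) :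
    Mealy ((I → Bool) × (Fin k → Bool)) ((O → Bool) × (Fin k → Bool) × Fin k) S where
  s0 := T.s0
  tr s x := let r := T.tr s x.1 x.2; ((r.1, r.2.2.1, r.2.1), r.2.2.2)

def Mealy.toRegTransducer
    (M : Mealy ((I → Bool) × (Fin k → Bool)) ((O → Bool) × (Fin k → Bool) × Fin k) S)
    (d₀ : D) : RegTransducer I O D S k where
  s0 := M.s0
  d0 := d₀
  tr s i g := let m := M.tr s (i, g); (m.1.1, m.1.2.2, m.1.2.1, m.2)

variable [DecidableEq D]

theorem RegTransducer.isWordOf_of_boolAssociate (T : RegTransducer I O D S k)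
    {inp : ℕ → I → Bool} {giT : ℕ → Fin k → Bool} {outp : ℕ → O → Bool}
    {asgnT : ℕ → Fin k → Bool} {ok : ℕ → Fin k} {mst : ℕ → S} (hmst₀ : mst 0 = T.s0)
    (hmst : ∀ j, T.boolAssociate.tr (mst j) (inp j, giT j) =
      ((outp j, asgnT j, ok j), mst (j + 1)))
    {di dout : ℕ → D} (tregs : ℕ → Fin k → D) (h₀ : ∀ n, tregs 0 n = T.d0)
    (hsucc : ∀ j n, tregs (j + 1) n = if asgnT j n then di j else tregs j n)
    (hgi : ∀ j n, giT j n = decide (di j = tregs j n))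
    (hout : ∀ j, dout j = tregs j (ok j)) :
    IsWordOf T (fun j => Sum.elim (inp j) (outp j)) di dout := by
  refine ⟨mst, tregs, hmst₀, h₀, fun j => ?_⟩
  have hg : (fun n => decide (di j = tregs j n)) = giT j := funext fun n => (hgi j n).symm
  have hr := hmst j
  simp only [RegTransducer.boolAssociate, Prod.mk.injEq] at hr
  obtain ⟨⟨ho, ha, hk⟩, hs⟩ := hr
  simp only [Sum.elim_inl, Sum.elim_inr, hg]
  exact ⟨hs.symm, fun b => by rw [ho], by rw [hk, hout], fun n => by rw [ha, hsucc]⟩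

theorem Mealy.exists_run_of_isWordOf_toRegTransducer
    (M : Mealy ((I → Bool) × (Fin k → Bool)) ((O → Bool) × (Fin k → Bool) × Fin k) S)
    {d₀ : D} {lio : ℕ → (I ⊕ O) → Bool} {di dout : ℕ → D}
    (h : IsWordOf (M.toRegTransducer d₀) lio di dout) :
    ∃ (tst : ℕ → S) (tregs : ℕ → Fin k → D) (asgnT : ℕ → Fin k → Bool) (ok : ℕ → Fin k),
      tst 0 = M.s0 ∧
      (∀ j, M.tr (tst j) (fun a => lio j (.inl a), fun n => decide (di j = tregs j n)) =
        ((fun b => lio j (.inr b), asgnT j, ok j), tst (j + 1))) ∧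
      (∀ n, tregs 0 n = d₀) ∧
      (∀ j n, tregs (j + 1) n = if asgnT j n then di j else tregs j n) ∧
      ∀ j, dout j = tregs j (ok j) := by
  obtain ⟨tst, tregs, h₀, hr₀, hstep⟩ := h
  refine ⟨tst, tregs, _, _, h₀, fun j => ?_, hr₀, fun j => (hstep j).2.2.2,
    fun j => (hstep j).2.2.1⟩
  obtain ⟨hs, ho, -, -⟩ := hstep j
  exact Prod.ext (Prod.ext (funext fun b => (ho b).symm) rfl) hs.symm

end BoolAssociate

theorem stmt13_general (D I O Q : Type) [Infinite D] [DecidableEq D]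
    (kA kT : ℕ) (A : RegAutomaton (I ⊕ O) D Q (Fin kA)) :
    (∃ (S : Type) (T : RegTransducer I O D S kT), T.d0 = A.d0 ∧
        ∀ (lio : ℕ → (I ⊕ O) → Bool) (di dout : ℕ → D),
          IsWordOf T lio di dout →
          ∀ dp : DataPath A lio di dout, ∃ N, ∀ j, N ≤ j → dp.st j ∉ A.F) ↔
    (∃ (S : Type)
        (M : Mealy ((I → Bool) × (Fin kT → Bool))
          ((O → Bool) × (Fin kT → Bool) × Fin kT) S),
        ∀ (inp : ℕ → I → Bool) (giT : ℕ → Fin kT → Bool) (outp : ℕ → O → Bool)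
          (asgnT : ℕ → Fin kT → Bool) (ok : ℕ → Fin kT),
          (∃ st : ℕ → S, st 0 = M.s0 ∧
            ∀ j, M.tr (st j) (inp j, giT j) = ((outp j, asgnT j, ok j), st (j + 1))) →
          ∀ hp : HPath A kT,
            (∀ j, hp.lIO j = Sum.elim (inp j) (outp j)) →
            (∀ j, hp.asgnTP j = asgnT j) →
            (∀ j, hp.giT j = giT j) →
            (∀ j, hp.ok j = ok j) →
            (∀ j, hp.asgnT j = asgnT j) →
            ∃ N, ∀ j, N ≤ j → ¬((hp.st j).1 ∈ A.F ∨ (hp.st j).2 = false)) := by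
  constructor
  · rintro ⟨S, T, hd₀, hT⟩
    refine ⟨S, T.boolAssociate, ?_⟩
    rintro inp giT outp asgnT ok ⟨mst, hmst₀, hmst⟩ hp hlio - hgiT hok hasgnT
    obtain ⟨di, dout, dp, tregs, hst, h₀, hsucc, hgi, hout⟩ := hp.exists_dataPath
    have hword : IsWordOf T hp.lIO di dout := by
      rw [funext hlio]
      refine T.isWordOf_of_boolAssociate hmst₀ hmst tregs (hd₀ ▸ h₀) (fun j n => ?_)
        (fun j n => ?_) fun j => ?_
      · rw [hsucc, hasgnT]
      · rw [← hgiT, hgi]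
      · rw [hout, hok]
    obtain ⟨N, hN⟩ := hT _ _ _ hword dp
    refine ⟨N, fun j hj => ?_⟩
    simpa [hp.st_snd_eq_true, ← hst] using hN j hj
  · rintro ⟨S, M, hM⟩
    refine ⟨S, M.toRegTransducer A.d0, rfl, fun lio di dout hword dp => ?_⟩
    obtain ⟨tst, tregs, asgnT, ok, htst₀, htst, h₀, hsucc, hout⟩ :=
      M.exists_run_of_isWordOf_toRegTransducer hword
    obtain ⟨hp, hst, hlio, hasgnTP, hgiT, hok, hasgnT⟩ :=
      dp.exists_hPath tregs asgnT ok h₀ hsucc hout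
    obtain ⟨N, hN⟩ := hM _ _ _ asgnT ok ⟨tst, htst₀, htst⟩ hp
      (fun j => by rw [hlio]; ext (a | b) <;> rfl) (congrFun hasgnTP)
      (fun j => funext (hgiT j)) (congrFun hok) (congrFun hasgnT)
    exact ⟨N, fun j hj hF => hN j hj (.inl (by rwa [hst]))⟩

/-- there exists a `k_T`-register transducer `T` over `I` and `O` (with
the initial register value of `A`) with `T ⊨ A` (every word of `T` is accepted by the
universal co-Büchi automaton `A`) iff there exists a register-less deterministic Mealy
transducer with Boolean inputs `I ∪ G_i^T` and Boolean outputs `O ∪ Asgn^T ∪ O_{k_T}`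
all of whose words are accepted by `hide_A(AT_B @ W)` (every path of `hide_A(AT_B @ W)`
carrying such a word visits the co-Büchi set only finitely often). -/
theorem stmt13 (D I O Q : Type) [Infinite D] [DecidableEq D]
    [Finite I] [Finite O] [Finite Q]
    (kA kT : ℕ) (hkT : 1 ≤ kT) (A : RegAutomaton (I ⊕ O) D Q (Fin kA)) :
    (∃ (S : Type) (T : RegTransducer I O D S kT), T.d0 = A.d0 ∧
        ∀ (lio : ℕ → (I ⊕ O) → Bool) (di dout : ℕ → D),
          IsWordOf T lio di dout →
          ∀ dp : DataPath A lio di dout, ∃ N, ∀ j, N ≤ j → dp.st j ∉ A.F) ↔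
    (∃ (S : Type)
        (M : Mealy ((I → Bool) × (Fin kT → Bool))
          ((O → Bool) × (Fin kT → Bool) × Fin kT) S),
        ∀ (inp : ℕ → I → Bool) (giT : ℕ → Fin kT → Bool) (outp : ℕ → O → Bool)
          (asgnT : ℕ → Fin kT → Bool) (ok : ℕ → Fin kT),
          (∃ st : ℕ → S, st 0 = M.s0 ∧
            ∀ j, M.tr (st j) (inp j, giT j) = ((outp j, asgnT j, ok j), st (j + 1))) →
          ∀ hp : HPath A kT,
            (∀ j, hp.lIO j = Sum.elim (inp j) (outp j)) →
            (∀ j, hp.asgnTP j = asgnT j) →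
            (∀ j, hp.giT j = giT j) →
            (∀ j, hp.ok j = ok j) →
            (∀ j, hp.asgnT j = asgnT j) →
            ∃ N, ∀ j, N ≤ j → ¬((hp.st j).1 ∈ A.F ∨ (hp.st j).2 = false)) :=
  stmt13_general D I O Q kA kT A
end

section
/- Let A be a nondeterministic Büchi k-register automaton with initial register value d0 over the infinite data-domain D. If some word over 2^P × D × D is accepted by A, then there exists a finite subset D' ⊆ D with d0 ∈ D' and |D'| ≤ k+1 such that some word all of whose data-values (for both i and o) lie in D' is accepted by A. -/
noncomputable section StmtAux

variable {D : Type} [DecidableEq D]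

lemma exists_spare {k : ℕ} (D' : Finset D) (h : k + 1 ≤ D'.card) (r' : Fin k → D) :
    ∃ d, d ∈ D' ∧ ∀ n, d ≠ r' n := by
  have h1 : (Finset.image r' Finset.univ).card < D'.card :=
    lt_of_le_of_lt (le_trans Finset.card_image_le (by simp))
      (lt_of_lt_of_le (Nat.lt_succ_self k) h)
  have h2 : ¬ D' ⊆ Finset.image r' Finset.univ := fun hs =>
    absurd (Finset.card_le_card hs) (not_le.mpr h1)
  obtain ⟨d, hd1, hd2⟩ := Finset.not_subset.mp h2
  exact ⟨d, hd1, fun n hn => hd2 (Finset.mem_image.mpr ⟨n, Finset.mem_univ n, hn.symm⟩)⟩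

/-- Rename a data value `x`: if `x` equals some register value `r n`, use the
corresponding renamed register value `r' n`; otherwise use a fresh value from `D'`. -/
def pickVal {k : ℕ} (D' : Finset D) (h : k + 1 ≤ D'.card) (x : D) (r r' : Fin k → D) : D :=
  if hx : ∃ n, x = r n then r' hx.choose
  else (exists_spare D' h r').choose

lemma pickVal_mem {k : ℕ} (D' : Finset D) (h : k + 1 ≤ D'.card) (x : D) (r r' : Fin k → D)
    (hr' : ∀ n, r' n ∈ D') : pickVal D' h x r r' ∈ D' := by
  unfold pickVal
  split
  · exact hr' _
  · exact (exists_spare D' h r').choose_spec.1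

lemma pickVal_iff {k : ℕ} (D' : Finset D) (h : k + 1 ≤ D'.card) (x : D) (r r' : Fin k → D)
    (hcong : ∀ m n, r m = r n ↔ r' m = r' n) (n : Fin k) :
    (x = r n) ↔ (pickVal D' h x r r' = r' n) := by
  unfold pickVal
  split
  · rename_i hx
    have key : ∀ n0, x = r n0 → ((x = r n) ↔ (r' n0 = r' n)) := by
      intro n0 h0; rw [h0]; exact hcong n0 n
    exact key _ hx.choose_spec
  · rename_i hx
    push_neg at hx
    exact iff_of_false (hx n) ((exists_spare D' h r').choose_spec.2 n)

/-- The renamed register contents. -/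
def simulRegs {k : ℕ} (D' : Finset D) (h : k + 1 ≤ D'.card) (d0 : D) (di : ℕ → D)
    (regs : ℕ → Fin k → D) (asgn : ℕ → Fin k → Bool) : ℕ → Fin k → D
  | 0 => fun _ => d0
  | j + 1 => fun n =>
      if asgn j n then pickVal D' h (di j) (regs j) (simulRegs D' h d0 di regs asgn j)
      else simulRegs D' h d0 di regs asgn j n

lemma simul_inv {k : ℕ} (D' : Finset D) (h : k + 1 ≤ D'.card) (d0 : D) (hd0 : d0 ∈ D')
    (di : ℕ → D) (regs : ℕ → Fin k → D) (asgn : ℕ → Fin k → Bool)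
    (hinit : ∀ n, regs 0 n = d0)
    (hupd : ∀ j n, regs (j + 1) n = if asgn j n then di j else regs j n) (j : ℕ) :
    (∀ m n, regs j m = regs j n ↔
        simulRegs D' h d0 di regs asgn j m = simulRegs D' h d0 di regs asgn j n)
    ∧ (∀ n, simulRegs D' h d0 di regs asgn j n ∈ D') := by
  induction j with
  | zero => exact ⟨fun m n => by simp [hinit, simulRegs], fun n => hd0⟩
  | succ j ih =>
    refine ⟨fun m n => ?_, fun n => ?_⟩
    · rw [hupd, hupd]
      rcases Bool.eq_false_or_eq_true (asgn j m) with hm | hm <;>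
        rcases Bool.eq_false_or_eq_true (asgn j n) with hn | hn <;>
        simp only [simulRegs, hm, hn, Bool.false_eq_true, if_true, if_false]
      · exact pickVal_iff D' h (di j) _ _ ih.1 n
      · exact eq_comm.trans ((pickVal_iff D' h (di j) _ _ ih.1 m).trans eq_comm)
      · exact ih.1 m n
    · rcases Bool.eq_false_or_eq_true (asgn j n) with hn | hn <;>
        simp only [simulRegs, hn, Bool.false_eq_true, if_true, if_false]
      · exact pickVal_mem D' h _ _ _ ih.2
      · exact ih.2 n

end StmtAux

/-- cutoff: if some word over `2^P × D × D` is accepted by the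
nondeterministic Büchi `k`-register automaton `A` (some data-path on it visits `F`
infinitely often), then there is a finite subset `D' ⊆ D` containing the initial
register value `d0`, of size at most `k + 1`, such that some word all of whose
data-values lie in `D'` is accepted by `A`. -/
theorem stmt18 (D P Q : Type) [Infinite D] [DecidableEq D] [Finite P] [Finite Q]
    (k : ℕ) (A : RegAutomaton P D Q (Fin k))
    (h : ∃ (l : ℕ → P → Bool) (di dout : ℕ → D) (dp : DataPath A l di dout),
      ∀ N, ∃ j, N ≤ j ∧ dp.st j ∈ A.F) :
    ∃ D' : Finset D, A.d0 ∈ D' ∧ D'.card ≤ k + 1 ∧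
      ∃ (l : ℕ → P → Bool) (di dout : ℕ → D),
        (∀ j, di j ∈ D' ∧ dout j ∈ D') ∧
        ∃ dp : DataPath A l di dout, ∀ N, ∃ j, N ≤ j ∧ dp.st j ∈ A.F := by
  classical
  obtain ⟨l, di, dout, dp, hacc⟩ := h
  obtain ⟨D', hsub, hcard⟩ :=
    Infinite.exists_superset_card_eq ({A.d0} : Finset D) (k + 1) (by simp)
  have h1 : k + 1 ≤ D'.card := hcard.ge
  have hd0 : A.d0 ∈ D' := hsub (Finset.mem_singleton_self _)
  set r' := simulRegs D' h1 A.d0 di dp.regs dp.asgn with hr'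
  have inv := simul_inv D' h1 A.d0 hd0 di dp.regs dp.asgn dp.init_regs dp.update
  set di' : ℕ → D := fun j => pickVal D' h1 (di j) (dp.regs j) (r' j) with hdi'
  set dout' : ℕ → D := fun j => pickVal D' h1 (dout j) (dp.regs j) (r' j) with hdout'
  refine ⟨D', hd0, hcard.le, l, di', dout',
    fun j => ⟨pickVal_mem D' h1 _ _ _ (inv j).2, pickVal_mem D' h1 _ _ _ (inv j).2⟩, ?_⟩
  refine ⟨⟨dp.st, r', dp.asgn, dp.init_st, fun n => rfl, ?_, ?_⟩, hacc⟩
  · intro j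
    have gi : (fun n => decide (di' j = r' j n)) = fun n => decide (di j = dp.regs j n) := by
      funext n
      exact decide_eq_decide.mpr (pickVal_iff D' h1 (di j) _ _ (inv j).1 n).symm
    have go : (fun n => decide (dout' j = r' j n)) = fun n => decide (dout j = dp.regs j n) := by
      funext n
      exact decide_eq_decide.mpr (pickVal_iff D' h1 (dout j) _ _ (inv j).1 n).symm
    rw [gi, go]
    exact dp.step j
  · intro j n
    rfl
end
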